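/- For real β, X > 0, and h ∈ ℕ with h ≥ 1, writing S(X,h,β) = ∑_{1 ≤ n ≤ X} ε(n) ε(n+h) e(β n), one has S(X, 2h+1, β) = -S(X/2, h, 2β) - e(β) · S(X/2, h+1, 2β) + O(1), with an absolute implied constant. -/

import Mathlib

/-!
Group the terms of `S(X, 2h + 1, β)` in pairs `n = 2m, 2m + 1`. Since `ε(2m) = ε(m)`,
`ε(2m + 1) = -ε(m)`, `2m + (2h + 1) = 2(m + h) + 1` and `2m + 1 + (2h + 1) = 2(m + h + 1)`,
the pair contributes `-ε(m)ε(m + h)e(2βm) - e(β)ε(m)ε(m + h + 1)e(2βm)`. Summed over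
`m ≤ X/2` this is the identity, exact up to a bounded number of boundary terms of modulus one.
-/

open Complex Finset

/-- `e(x) = exp(2πix)`. -/
noncomputable def e (x : ℝ) : ℂ := Complex.exp (2 * Real.pi * Complex.I * x)

/-- `ε(n) = (-1)^(s₂ n)` where `s₂` is the binary digit sum. -/
def eps (n : ℕ) : ℤ := (-1) ^ ((Nat.digits 2 n).sum)

/-- `S(Y,h,β) = ∑_{1 ≤ n ≤ Y} ε(n) ε(n+h) e(βn)`. -/
noncomputable def S (Y : ℝ) (h : ℕ) (β : ℝ) : ℂ :=
  ∑ n ∈ Finset.Icc 1 ⌊Y⌋₊, (eps n : ℂ) * (eps (n + h) : ℂ) * e (β * n)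

lemma norm_e (x : ℝ) : ‖e x‖ = 1 := by
  simp [e, Complex.norm_exp]

lemma e_add (x y : ℝ) : e (x + y) = e x * e y := by
  rw [e, e, e, ← Complex.exp_add]
  push_cast
  ring_nf

lemma norm_eps (n : ℕ) : ‖(eps n : ℂ)‖ = 1 := by
  simp [eps]

lemma eps_two_mul (m : ℕ) : eps (2 * m) = eps m := by
  rcases Nat.eq_zero_or_pos m with rfl | hm
  · rfl
  · rw [eps, eps, ← zero_add (2 * m), Nat.digits_add 2 one_lt_two 0 m two_pos (.inr hm.ne'),
      List.sum_cons, zero_add]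

lemma eps_two_mul_add_one (m : ℕ) : eps (2 * m + 1) = -eps m := by
  rw [eps, eps, add_comm, Nat.digits_add 2 one_lt_two 1 m one_lt_two (.inl one_ne_zero),
    List.sum_cons, pow_add]
  ring

noncomputable def corrTerm (β : ℝ) (h n : ℕ) : ℂ :=
  (eps n : ℂ) * (eps (n + h) : ℂ) * e (β * n)

lemma norm_corrTerm (β : ℝ) (h n : ℕ) : ‖corrTerm β h n‖ = 1 := by
  rw [corrTerm, norm_mul, norm_mul, norm_e, norm_eps, norm_eps, one_mul, one_mul]

lemma corrTerm_two_mul_add_corrTerm_two_mul_add_one (β : ℝ) (h m : ℕ) :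
    corrTerm β (2 * h + 1) (2 * m) + corrTerm β (2 * h + 1) (2 * m + 1)
      = -corrTerm (2 * β) h m - e β * corrTerm (2 * β) (h + 1) m := by
  have e_even : e (β * ↑(2 * m)) = e (2 * β * m) := by
    congr 1; push_cast; ring
  have e_odd : e (β * ↑(2 * m + 1)) = e β * e (2 * β * m) := by
    rw [← e_add]; congr 1; push_cast; ring
  rw [corrTerm, corrTerm, corrTerm, corrTerm, e_even, e_odd,
    show 2 * m + (2 * h + 1) = 2 * (m + h) + 1 by ring,
    show 2 * m + 1 + (2 * h + 1) = 2 * (m + h + 1) by ring,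
    eps_two_mul, eps_two_mul, eps_two_mul_add_one, eps_two_mul_add_one, ← add_assoc]
  push_cast
  ring

lemma sum_range_two_mul {M : Type*} [AddCommMonoid M] (f : ℕ → M) (n : ℕ) :
    ∑ i ∈ range (2 * n), f i = ∑ i ∈ range n, (f (2 * i) + f (2 * i + 1)) := by
  induction n with
  | zero => simp
  | succ n ih =>
    rw [mul_add, mul_one, sum_range_succ, sum_range_succ, sum_range_succ, ih, add_assoc]

lemma sum_range_two_mul_corrTerm (β : ℝ) (h M : ℕ) :
    ∑ n ∈ range (2 * M), corrTerm β (2 * h + 1) n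
      = -∑ m ∈ range M, corrTerm (2 * β) h m
        - e β * ∑ m ∈ range M, corrTerm (2 * β) (h + 1) m := by
  simp only [sum_range_two_mul, corrTerm_two_mul_add_corrTerm_two_mul_add_one,
    sum_sub_distrib, sum_neg_distrib, mul_sum]

lemma S_eq_sum_range_sub (Y : ℝ) (h : ℕ) (β : ℝ) :
    S Y h β = ∑ n ∈ range (⌊Y⌋₊ + 1), corrTerm β h n - corrTerm β h 0 := by
  rw [S, sum_range_succ', add_sub_cancel_right, range_eq_Ico, sum_Ico_add']
  rfl

lemma norm_sum_range_two_mul_sub_le {E : Type*} [SeminormedAddCommGroup E] {f : ℕ → E}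
    (hf : ∀ n, ‖f n‖ ≤ 1) (N : ℕ) :
    ‖∑ n ∈ range (2 * (N / 2 + 1)), f n - ∑ n ∈ range (N + 1), f n‖ ≤ 1 := by
  obtain ⟨M, rfl | rfl⟩ := Nat.even_or_odd' N
  · rw [show 2 * (2 * M / 2 + 1) = 2 * M + 1 + 1 by omega, sum_range_succ, add_sub_cancel_left]
    exact hf _
  · rw [show 2 * ((2 * M + 1) / 2 + 1) = 2 * M + 1 + 1 by omega, sub_self, norm_zero]
    exact zero_le_one

theorem S_two_mul_h_add_one : ∃ C : ℝ, ∀ (β X : ℝ) (h : ℕ), 0 < X → 1 ≤ h →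
    ‖S X (2 * h + 1) β -
      (-S (X / 2) h (2 * β) - e β * S (X / 2) (h + 1) (2 * β))‖ ≤ C := by
  refine ⟨4, fun β X h _ _ => ?_⟩
  set N := ⌊X⌋₊
  have tail := norm_sum_range_two_mul_sub_le (fun n => (norm_corrTerm β (2 * h + 1) n).le) N
  have hdiff : S X (2 * h + 1) β -
      (-S (X / 2) h (2 * β) - e β * S (X / 2) (h + 1) (2 * β))
      = -(∑ n ∈ range (2 * (N / 2 + 1)), corrTerm β (2 * h + 1) n
            - ∑ n ∈ range (N + 1), corrTerm β (2 * h + 1) n)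
        + -corrTerm β (2 * h + 1) 0 + -corrTerm (2 * β) h 0
        + -(e β * corrTerm (2 * β) (h + 1) 0) := by
    rw [sum_range_two_mul_corrTerm, S_eq_sum_range_sub, S_eq_sum_range_sub, S_eq_sum_range_sub,
      Nat.floor_div_ofNat]
    ring
  rw [hdiff]
  refine norm_add₄_le.trans ?_
  simp only [norm_neg, norm_mul, norm_e, norm_corrTerm]
  linarith
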